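/- arXiv:1302.6966 — 3 statements merged into one kernel-verified Lean document; each statement's English description precedes it below -/
import Mathlib

section
/- Let ξ be a lightlike vector in Minkowski space ℝ^{n,1} and let u, v be future-directed timelike unit vectors (⟨u,u⟩ = ⟨v,v⟩ = -1). Then |⟨v,ξ⟩| ≤ 2·|⟨u,v⟩|·|⟨u,ξ⟩|, where ⟨·,·⟩ is the Minkowski bilinear form. -/
/-- The Minkowski bilinear form on `ℝ^{n,1}`: `⟨x,y⟩ = -x₀y₀ + x₁y₁ + ⋯ + xₙyₙ`. -/
noncomputable def mink {n : ℕ} (x y : Fin (n + 1) → ℝ) : ℝ :=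
  (∑ i, x i * y i) - 2 * (x 0 * y 0)

lemma mink_symm {n : ℕ} (x y : Fin (n + 1) → ℝ) : mink x y = mink y x := by
  simp [mink, mul_comm]

lemma mink_right {n : ℕ} (x y z : Fin (n + 1) → ℝ) (c : ℝ) :
    mink x (fun i => y i + c * z i) = mink x y + c * mink x z := by
  have h : ∀ i, x i * (y i + c * z i) = x i * y i + c * (x i * z i) := fun i => by ring
  simp only [mink, h, Finset.sum_add_distrib, ← Finset.mul_sum]
  ring

lemma mink_left {n : ℕ} (x y z : Fin (n + 1) → ℝ) (c : ℝ) :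
    mink (fun i => y i + c * z i) x = mink y x + c * mink z x := by
  rw [mink_symm, mink_right, mink_symm x y, mink_symm x z]

/-- Positive semidefiniteness on the orthogonal complement of a unit timelike vector. -/
lemma perp_nonneg {n : ℕ} (u w : Fin (n + 1) → ℝ) (hu : mink u u = -1)
    (h : mink u w = 0) : 0 ≤ mink w w := by
  have hsum : ∀ x y : Fin (n + 1) → ℝ,
      (∑ i, x i * y i) = x 0 * y 0 + ∑ i : Fin n, x i.succ * y i.succ := by
    intro x y; rw [Fin.sum_univ_succ]
  have cs := Finset.sum_mul_sq_le_sq_mul_sq Finset.univ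
    (fun i : Fin n => u i.succ) (fun i : Fin n => w i.succ)
  have hP : (∑ i : Fin n, u i.succ ^ 2) = u 0 * u 0 - 1 := by
    have := hu
    simp only [mink, hsum u u] at this
    have e : ∀ i : Fin n, u i.succ ^ 2 = u i.succ * u i.succ := fun i => sq _
    rw [Finset.sum_congr rfl fun i _ => e i]
    linarith
  have hQ : 0 ≤ ∑ i : Fin n, w i.succ ^ 2 :=
    Finset.sum_nonneg fun i _ => sq_nonneg _
  have hR : (∑ i : Fin n, u i.succ * w i.succ) = u 0 * w 0 := by
    have := h
    simp only [mink, hsum u w] at this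
    linarith
  have hgoal : mink w w = (∑ i : Fin n, w i.succ ^ 2) - w 0 * w 0 := by
    simp only [mink, hsum w w]
    have e : ∀ i : Fin n, w i.succ * w i.succ = w i.succ ^ 2 := fun i => (sq _).symm
    rw [Finset.sum_congr rfl fun i _ => e i]
    ring
  rw [hP, hR] at cs
  have hPnn : (0:ℝ) ≤ ∑ i : Fin n, u i.succ ^ 2 := Finset.sum_nonneg fun i _ => sq_nonneg _
  have hu1 : 1 ≤ u 0 * u 0 := by linarith [hP ▸ hPnn]
  rw [hgoal]
  nlinarith [cs, hQ, hu1]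

/-- Cauchy–Schwarz on the orthogonal complement of a unit timelike vector. -/
lemma perp_cs {n : ℕ} (u w z : Fin (n + 1) → ℝ) (hu : mink u u = -1)
    (hw : mink u w = 0) (hz : mink u z = 0) :
    (mink w z) ^ 2 ≤ mink w w * mink z z := by
  have key : ∀ t : ℝ, 0 ≤ mink z z * (t * t) + (2 * mink w z) * t + mink w w := by
    intro t
    have h1 : mink u (fun i => w i + t * z i) = 0 := by
      rw [mink_right, hw, hz]; ring
    have h2 := perp_nonneg u _ hu h1
    have e : mink (fun i => w i + t * z i) (fun i => w i + t * z i)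
        = mink w w + 2 * t * mink w z + t * t * mink z z := by
      rw [mink_right, mink_left, mink_left, mink_symm z w]
      ring
    rw [e] at h2
    linarith
  have hd := discrim_le_zero key
  rw [discrim] at hd
  nlinarith [hd]

theorem stmt0 (n : ℕ) (ξ u v : Fin (n + 1) → ℝ)
    (hξ : mink ξ ξ = 0) (hξ0 : ξ ≠ 0)
    (hu : mink u u = -1) (hu0 : 0 < u 0)
    (hv : mink v v = -1) (hv0 : 0 < v 0) :
    |mink v ξ| ≤ 2 * |mink u v| * |mink u ξ| := by
  set A := mink u v with hA
  set B := mink u ξ with hB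
  set C := mink v ξ with hC
  set w : Fin (n + 1) → ℝ := fun i => v i + A * u i with hwdef
  set z : Fin (n + 1) → ℝ := fun i => ξ i + B * u i with hzdef
  have hw : mink u w = 0 := by rw [hwdef, mink_right, ← hA, hu]; ring
  have hz : mink u z = 0 := by rw [hzdef, mink_right, ← hB, hu]; ring
  have hww : mink w w = A * A - 1 := by
    rw [hwdef, mink_right, mink_left, mink_left, mink_symm v u, ← hA, hv, hu]
    ring
  have hzz : mink z z = B * B := by
    rw [hzdef, mink_right, mink_left, mink_left, mink_symm ξ u, ← hB, hξ, hu]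
    ring
  have hwz : mink w z = C + A * B := by
    rw [hwdef, hzdef, mink_right, mink_left, mink_left, mink_symm v u, ← hA, ← hB, ← hC, hu]
    ring
  have h4 : (C + A * B) ^ 2 ≤ (A * A - 1) * (B * B) := by
    rw [← hww, ← hzz, ← hwz]
    exact perp_cs u w z hu hw hz
  -- From h4: C^2 + 2*A*B*C + B*B ≤ 0
  have h5 : C ^ 2 + 2 * (A * B * C) + B * B ≤ 0 := by nlinarith [h4]
  have habs : |A * B * C| = |A| * |B| * |C| := by rw [abs_mul, abs_mul]
  have h6 : C ^ 2 ≤ 2 * (|A| * |B|) * |C| := by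
    have := neg_abs_le (A * B * C)
    nlinarith [this, habs, sq_nonneg B]
  rcases (abs_nonneg C).lt_or_eq with hpos | hzero
  · have h7 : |C| * |C| ≤ (2 * (|A| * |B|)) * |C| := by
      nlinarith [sq_abs C, h6]
    have := le_of_mul_le_mul_right h7 hpos
    linarith [this]
  · rw [← hzero]
    positivity
end

section
/- Let u : ℝ → ℝ be a convex function such that the image of its derivative u' (defined on the set of differentiability points) has Lebesgue measure zero in ℝ. Then the second derivative measure u'' is purely atomic, and its support equals the set of points where u' (i.e., the subdifferential) is discontinuous (points of non-differentiability of u). -/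
open MeasureTheory Set Filter Topology Function

/-!
Let `C` be the set of continuity points of the right derivative `g` of `u`. The left derivative
of `u` is `leftLim g`, so `C` is exactly the set where `u` is differentiable, and there
`deriv u = g`. A compact `K ⊆ C` with `g K ⊆ [c, d]` has `g`-mass at most
`g (max K) - g (min K) ≤ d - c`, because the atom of `g.measure` at `min K` vanishes. By inner
regularity, the image under `g` of `g.measure` restricted to `C` is therefore dominated by Lebesgue
measure, so the `g`-mass of the differentiability points is at most the Lebesgue measure of
their image under `deriv u`, which is zero. A point of non-differentiability carries the atom
`g x - leftLim g x > 0`.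
-/

namespace MeasureTheory.Measure

theorem le_volume_of_forall_Ioc_le (μ : Measure ℝ)
    (h : ∀ a b : ℝ, μ (Ioc a b) ≤ ENNReal.ofReal (b - a)) : μ ≤ volume := by
  have hle : μ.toOuterMeasure ≤ StieltjesFunction.id.outer :=
    OuterMeasure.le_ofFunction.2 fun t => by
      rw [StieltjesFunction.length_eq]
      exact le_iInf₂ fun a b => le_iInf fun hts =>
        (measure_mono fun x hx => hts ⟨hx, not_isBot x⟩).trans (h a b)
  intro s
  rw [Real.volume_val, StieltjesFunction.measure_def]
  exact hle s

end MeasureTheory.Measure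

namespace StieltjesFunction

variable (g : StieltjesFunction ℝ)

theorem measurableSet_setOf_leftLim_eq : MeasurableSet {x | leftLim g x = g x} := by
  simpa only [compl_ofPred, not_not] using g.countable_leftLim_ne.measurableSet.compl

theorem measure_le_of_isCompact {K : Set ℝ} {c d : ℝ} (hK : IsCompact K)
    (hKc : K ⊆ {x | leftLim g x = g x}) (hKg : ∀ x ∈ K, g x ∈ Icc c d) :
    g.measure K ≤ ENNReal.ofReal (d - c) := by
  rcases K.eq_empty_or_nonempty with rfl | hne
  · simp
  set a := sInf K
  set b := sSup K
  have ha : a ∈ K := hK.sInf_mem hne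
  have hb : b ∈ K := hK.sSup_mem hne
  have hK_sub : K ⊆ {a} ∪ Ioc a b := fun x hx =>
    (eq_or_lt_of_le (csInf_le hK.bddBelow hx)).imp (fun h => h.symm)
      fun h => ⟨h, le_csSup hK.bddAbove hx⟩
  calc g.measure K ≤ g.measure {a} + g.measure (Ioc a b) :=
        (measure_mono hK_sub).trans (measure_union_le _ _)
    _ = ENNReal.ofReal (g b - g a) := by
        rw [measure_singleton, hKc ha, sub_self, ENNReal.ofReal_zero, zero_add, measure_Ioc]
    _ ≤ ENNReal.ofReal (d - c) :=
        ENNReal.ofReal_le_ofReal (sub_le_sub (hKg b hb).2 (hKg a ha).1)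

theorem measure_preimage_Ioc_inter_le (c d : ℝ) :
    g.measure (g ⁻¹' Ioc c d ∩ {x | leftLim g x = g x}) ≤ ENNReal.ofReal (d - c) := by
  rw [((g.mono.measurable measurableSet_Ioc).inter
    g.measurableSet_setOf_leftLim_eq).measure_eq_iSup_isCompact]
  exact iSup₂_le fun K hKs => iSup_le fun hK =>
    g.measure_le_of_isCompact hK (fun x hx => (hKs hx).2) fun x hx =>
      Ioc_subset_Icc_self (hKs hx).1

theorem map_restrict_le_volume :
    (g.measure.restrict {x | leftLim g x = g x}).map g ≤ volume :=
  Measure.le_volume_of_forall_Ioc_le _ fun c d => by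
    rw [Measure.map_apply g.mono.measurable measurableSet_Ioc,
      Measure.restrict_apply (g.mono.measurable measurableSet_Ioc)]
    exact g.measure_preimage_Ioc_inter_le c d

theorem measure_preimage_inter_le_volume (T : Set ℝ) :
    g.measure (g ⁻¹' T ∩ {x | leftLim g x = g x}) ≤ volume T :=
  calc g.measure (g ⁻¹' T ∩ {x | leftLim g x = g x})
      ≤ g.measure.restrict {x | leftLim g x = g x} (g ⁻¹' T) := Measure.le_restrict_apply _ _
    _ ≤ (g.measure.restrict {x | leftLim g x = g x}).map g T :=
        Measure.le_map_apply g.mono.measurable.aemeasurable T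
    _ ≤ volume T := g.map_restrict_le_volume T

end StieltjesFunction

namespace ConvexOn

variable {u g : ℝ → ℝ} {x y : ℝ}

theorem slope_le_of_hasDerivWithinAt_Ioi (hu : ConvexOn ℝ univ u) {f' : ℝ} (hxy : x < y)
    (hf' : HasDerivWithinAt u f' (Ioi y) y) : slope u x y ≤ f' := by
  refine ge_of_tendsto ((hasDerivWithinAt_iff_tendsto_slope' self_notMem_Ioi).1 hf') ?_
  filter_upwards [self_mem_nhdsWithin] with w (hw : y < w)
  simpa only [slope_def_field, slope_comm u x y] using
    hu.slope_mono_adjacent (mem_univ x) (mem_univ w) hxy hw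

variable (hu : ConvexOn ℝ univ u) (hg : ∀ x, HasDerivWithinAt u (g x) (Ioi x) x)
include hu hg

theorem monotone_of_hasDerivWithinAt_Ioi : Monotone g := fun x y hxy =>
  hxy.eq_or_lt.elim (fun h => h ▸ le_rfl) fun h =>
    (hu.le_slope_of_hasDerivWithinAt_Ioi (mem_univ x) (mem_univ y) h (hg x)).trans
      (hu.slope_le_of_hasDerivWithinAt_Ioi h (hg y))

theorem slope_le_leftLim (hyx : y < x) : slope u y x ≤ leftLim g x := by
  have hcont : ContinuousAt (slope u y) x := by
    have hu_cont : Continuous u := continuousOn_univ.1 (hu.continuousOn isOpen_univ)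
    simp only [slope_fun_def_field]
    exact (hu_cont.continuousAt.sub continuousAt_const).div
      (continuousAt_id.sub continuousAt_const) (sub_ne_zero.2 hyx.ne')
  refine le_of_tendsto_of_tendsto (hcont.tendsto.mono_left nhdsWithin_le_nhds)
    ((monotone_of_hasDerivWithinAt_Ioi hu hg).tendsto_leftLim x) ?_
  filter_upwards [Ioo_mem_nhdsLT hyx] with z hz
  exact hu.slope_le_of_hasDerivWithinAt_Ioi hz.1 (hg z)

theorem tendsto_slope_nhdsLT_leftLim : Tendsto (slope u x) (𝓝[<] x) (𝓝 (leftLim g x)) := by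
  refine tendsto_of_tendsto_of_tendsto_of_le_of_le'
    ((monotone_of_hasDerivWithinAt_Ioi hu hg).tendsto_leftLim x) tendsto_const_nhds ?_ ?_ <;>
    filter_upwards [self_mem_nhdsWithin] with z (hz : z < x) <;> rw [slope_comm]
  · exact hu.le_slope_of_hasDerivWithinAt_Ioi (mem_univ z) (mem_univ x) hz (hg z)
  · exact slope_le_leftLim hu hg hz

theorem hasDerivAt_iff_leftLim_eq {f' : ℝ} :
    HasDerivAt u f' x ↔ leftLim g x = f' ∧ g x = f' := by
  have hright := (hasDerivWithinAt_iff_tendsto_slope' self_notMem_Ioi).1 (hg x)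
  rw [hasDerivAt_iff_tendsto_slope_left_right]
  constructor
  · rintro ⟨hl, hr⟩
    exact ⟨tendsto_nhds_unique (tendsto_slope_nhdsLT_leftLim hu hg) hl,
      tendsto_nhds_unique hright hr⟩
  · rintro ⟨hl, hr⟩
    exact ⟨hl ▸ tendsto_slope_nhdsLT_leftLim hu hg, hr ▸ hright⟩

end ConvexOn

/-- Let `u : ℝ → ℝ` be convex, with right derivative given by a Stieltjes function `g`
(monotone and right-continuous). If the image of the derivative of `u` on the set of
differentiability points has Lebesgue measure zero, then the second derivative measure
`g.measure` is purely atomic with atoms exactly at the points of non-differentiability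
of `u`: it vanishes on the set of differentiability points, and each non-differentiability
point is an atom. -/
theorem stmt3 (u : ℝ → ℝ) (g : StieltjesFunction ℝ)
    (hu : ConvexOn ℝ Set.univ u)
    (hg : ∀ x, HasDerivWithinAt u (g x) (Set.Ioi x) x)
    (himg : volume (deriv u '' {x | DifferentiableAt ℝ u x}) = 0) :
    g.measure {x | DifferentiableAt ℝ u x} = 0 ∧
    ∀ x, ¬ DifferentiableAt ℝ u x → 0 < g.measure {x} := by
  have hderiv {x f'} : HasDerivAt u f' x ↔ leftLim g x = f' ∧ g x = f' :=
    hu.hasDerivAt_iff_leftLim_eq hg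
  refine ⟨?_, fun x hx => ?_⟩
  · have hsub : {x | DifferentiableAt ℝ u x} ⊆
        g ⁻¹' (deriv u '' {x | DifferentiableAt ℝ u x}) ∩ {x | leftLim g x = g x} :=
      fun x hx => by
        obtain ⟨hl, hr⟩ := hderiv.1 hx.hasDerivAt
        exact ⟨⟨x, hx, hr.symm⟩, hl.trans hr.symm⟩
    exact measure_mono_null hsub (nonpos_iff_eq_zero.1
      (himg ▸ g.measure_preimage_inter_le_volume _))
  · rw [g.measure_singleton, ENNReal.ofReal_pos, sub_pos]
    exact (g.mono.leftLim_le le_rfl).lt_of_ne fun h =>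
      hx (hderiv.2 ⟨h, rfl⟩).differentiableAt
end

section
/- Let A be an open bounded subset of ℝⁿ, M > 0, and let (f_k) be a sequence in L²(A) with 0 ≤ f_k ≤ M, converging weakly in L²(A) to f with 0 ≤ f ≤ M. If additionally f(x) ≥ limsup_k f_k(x) for almost every x ∈ A, then f_k → f strongly in L²(A) (and hence in L¹(A)). -/
/-!
Write `fₖ - f = (fₖ - f)⁺ - (fₖ - f)⁻`. The hypothesis `limsup fₖ ≤ f` makes the positive
part tend to `0` pointwise, and it is bounded, so `∫ (fₖ - f)⁺ → 0` by dominated convergence.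
Testing the weak convergence against the constant `1` gives `∫ (fₖ - f) → 0`, hence also
`∫ (fₖ - f)⁻ → 0`, i.e. `fₖ → f` in `L¹`. Since `|fₖ - f| ≤ M`, we have
`|fₖ - f|² ≤ M |fₖ - f|`, so the convergence also holds in `L²`.
-/

open MeasureTheory Filter Topology

theorem Filter.tendsto_max_sub_zero_of_limsup_le {ι : Type*} {l : Filter ι} {u : ι → ℝ}
    {c : ℝ} (hu : IsBoundedUnder (· ≤ ·) l u) (h : limsup u l ≤ c) :
    Tendsto (fun k => max (u k - c) 0) l (𝓝 0) := by
  refine tendsto_order.2 ⟨fun a ha => .of_forall fun k => ha.trans_le (le_max_right _ _),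
    fun a ha => ?_⟩
  filter_upwards [eventually_lt_of_limsup_lt (show limsup u l < c + a by linarith) hu] with k hk
  exact max_lt (by linarith) ha

namespace MeasureTheory

variable {α : Type*} [MeasurableSpace α] {μ : Measure α}

theorem tendsto_integral_max_sub_zero_of_limsup_le [IsFiniteMeasure μ]
    {fk : ℕ → α → ℝ} {f : α → ℝ} {M : ℝ}
    (hmeas : ∀ k, AEStronglyMeasurable (fk k) μ) (hfmeas : AEStronglyMeasurable f μ)
    (hbk : ∀ k, ∀ᵐ x ∂μ, fk k x ≤ M) (hf : ∀ᵐ x ∂μ, 0 ≤ f x)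
    (hae : ∀ᵐ x ∂μ, limsup (fun k => fk k x) atTop ≤ f x) :
    Tendsto (fun k => ∫ x, max (fk k x - f x) 0 ∂μ) atTop (𝓝 0) := by
  have hlim : ∀ᵐ x ∂μ, Tendsto (fun k => max (fk k x - f x) 0) atTop (𝓝 0) := by
    filter_upwards [ae_all_iff.2 hbk, hae] with x hx hxf
    exact tendsto_max_sub_zero_of_limsup_le (isBoundedUnder_of ⟨M, hx⟩) hxf
  simpa using tendsto_integral_of_dominated_convergence (fun _ => max M 0)
    (fun k => ((hmeas k).sub hfmeas).sup aestronglyMeasurable_const) (integrable_const _)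
    (fun k => by
      filter_upwards [hbk k, hf] with x hx hfx
      change ‖max (fk k x - f x) 0‖ ≤ _
      rw [Real.norm_of_nonneg (le_max_right _ _)]
      exact max_le_max (by linarith) le_rfl)
    hlim

theorem tendsto_integral_abs_sub_of_limsup_le [IsFiniteMeasure μ]
    {fk : ℕ → α → ℝ} {f : α → ℝ} {M : ℝ}
    (hfk : ∀ k, Integrable (fk k) μ) (hf : Integrable f μ)
    (hbk : ∀ k, ∀ᵐ x ∂μ, fk k x ≤ M) (hf_nonneg : ∀ᵐ x ∂μ, 0 ≤ f x)
    (hint : Tendsto (fun k => ∫ x, fk k x ∂μ) atTop (𝓝 (∫ x, f x ∂μ)))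
    (hae : ∀ᵐ x ∂μ, limsup (fun k => fk k x) atTop ≤ f x) :
    Tendsto (fun k => ∫ x, |fk k x - f x| ∂μ) atTop (𝓝 0) := by
  have hpos := tendsto_integral_max_sub_zero_of_limsup_le (fun k => (hfk k).1) hf.1 hbk
    hf_nonneg hae
  have hsplit : ∀ k, ∫ x, |fk k x - f x| ∂μ =
      2 * ∫ x, max (fk k x - f x) 0 ∂μ - (∫ x, fk k x ∂μ - ∫ x, f x ∂μ) := by
    intro k
    have habs : ∀ a : ℝ, |a| = 2 * max a 0 - a := fun a => by
      rcases le_total a 0 with ha | ha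
      · rw [abs_of_nonpos ha, max_eq_right ha]; ring
      · rw [abs_of_nonneg ha, max_eq_left ha]; ring
    simp only [habs]
    rw [integral_sub, integral_const_mul, integral_sub (hfk k) hf]
    · exact ((hfk k).sub hf).pos_part.const_mul 2
    · exact (hfk k).sub hf
  simp only [hsplit]
  simpa using (hpos.const_mul 2).sub (hint.sub_const (∫ x, f x ∂μ))

theorem tendsto_integral_abs_sq_of_tendsto_integral_abs {g : ℕ → α → ℝ} {M : ℝ}
    (hg : ∀ k, Integrable (g k) μ) (hbd : ∀ k, ∀ᵐ x ∂μ, |g k x| ≤ M)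
    (h : Tendsto (fun k => ∫ x, |g k x| ∂μ) atTop (𝓝 0)) :
    Tendsto (fun k => ∫ x, |g k x| ^ 2 ∂μ) atTop (𝓝 0) := by
  have hle : ∀ k, ∫ x, |g k x| ^ 2 ∂μ ≤ M * ∫ x, |g k x| ∂μ := fun k => by
    rw [← integral_const_mul]
    refine integral_mono_of_nonneg (.of_forall fun x => sq_nonneg _) ((hg k).abs.const_mul M) ?_
    filter_upwards [hbd k] with x hx
    rw [sq]
    exact mul_le_mul_of_nonneg_right hx (abs_nonneg _)
  simpa using squeeze_zero (fun k => integral_nonneg fun x => sq_nonneg _) hle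
    (by simpa using h.const_mul M)

end MeasureTheory

theorem stmt19_general (n : ℕ) (A : Set (EuclideanSpace ℝ (Fin n)))
    (hAb : Bornology.IsBounded A) (M : ℝ)
    (fk : ℕ → EuclideanSpace ℝ (Fin n) → ℝ) (f : EuclideanSpace ℝ (Fin n) → ℝ)
    (hmeas : ∀ k, AEStronglyMeasurable (fk k) (volume.restrict A))
    (hfmeas : AEStronglyMeasurable f (volume.restrict A))
    (hbk : ∀ k, ∀ᵐ x ∂(volume.restrict A), 0 ≤ fk k x ∧ fk k x ≤ M)
    (hbf : ∀ᵐ x ∂(volume.restrict A), 0 ≤ f x ∧ f x ≤ M)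
    (hweak : ∀ g : EuclideanSpace ℝ (Fin n) → ℝ,
      MemLp g 2 (volume.restrict A) →
      Tendsto (fun k => ∫ x in A, fk k x * g x) atTop (nhds (∫ x in A, f x * g x)))
    (hae : ∀ᵐ x ∂(volume.restrict A), limsup (fun k => fk k x) atTop ≤ f x) :
    Tendsto (fun k => ∫ x in A, |fk k x - f x| ^ 2) atTop (nhds 0) ∧
    Tendsto (fun k => ∫ x in A, |fk k x - f x|) atTop (nhds 0) := by
  have : IsFiniteMeasure (volume.restrict A) := isFiniteMeasure_restrict.2 hAb.measure_lt_top.ne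
  have hfk : ∀ k, Integrable (fk k) (volume.restrict A) := fun k =>
    .of_bound (hmeas k) M <| (hbk k).mono fun x hx => abs_le.2 ⟨by linarith [hx.1], hx.2⟩
  have hf : Integrable f (volume.restrict A) :=
    .of_bound hfmeas M <| hbf.mono fun x hx => abs_le.2 ⟨by linarith [hx.1], hx.2⟩
  have hint : Tendsto (fun k => ∫ x in A, fk k x) atTop (nhds (∫ x in A, f x)) := by
    simpa using hweak (fun _ => 1) (memLp_const 1)
  have hL1 := tendsto_integral_abs_sub_of_limsup_le hfk hf (fun k => (hbk k).mono fun _ hx => hx.2)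
    (hbf.mono fun _ hx => hx.1) hint hae
  have hbound : ∀ k, ∀ᵐ x ∂(volume.restrict A), |fk k x - f x| ≤ M := fun k => by
    filter_upwards [hbk k, hbf] with x hx hfx
    exact abs_sub_le_iff.2 ⟨by linarith [hx.2, hfx.1], by linarith [hx.1, hfx.2]⟩
  exact ⟨tendsto_integral_abs_sq_of_tendsto_integral_abs (fun k => (hfk k).sub hf) hbound hL1, hL1⟩

/-- If `(f_k)` is a sequence in `L²(A)` with `0 ≤ f_k ≤ M`, converging weakly in `L²(A)`
to `f` with `0 ≤ f ≤ M`, and if moreover `f(x) ≥ limsup_k f_k(x)` for a.e. `x ∈ A`, then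
`f_k → f` strongly in `L²(A)`, and hence in `L¹(A)`. -/
theorem stmt19 (n : ℕ) (A : Set (EuclideanSpace ℝ (Fin n)))
    (hA : IsOpen A) (hAb : Bornology.IsBounded A) (M : ℝ) (hM : 0 < M)
    (fk : ℕ → EuclideanSpace ℝ (Fin n) → ℝ) (f : EuclideanSpace ℝ (Fin n) → ℝ)
    (hmeas : ∀ k, AEStronglyMeasurable (fk k) (volume.restrict A))
    (hfmeas : AEStronglyMeasurable f (volume.restrict A))
    (hbk : ∀ k, ∀ᵐ x ∂(volume.restrict A), 0 ≤ fk k x ∧ fk k x ≤ M)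
    (hbf : ∀ᵐ x ∂(volume.restrict A), 0 ≤ f x ∧ f x ≤ M)
    (hweak : ∀ g : EuclideanSpace ℝ (Fin n) → ℝ,
      MemLp g 2 (volume.restrict A) →
      Tendsto (fun k => ∫ x in A, fk k x * g x) atTop (nhds (∫ x in A, f x * g x)))
    (hae : ∀ᵐ x ∂(volume.restrict A), limsup (fun k => fk k x) atTop ≤ f x) :
    Tendsto (fun k => ∫ x in A, |fk k x - f x| ^ 2) atTop (nhds 0) ∧
    Tendsto (fun k => ∫ x in A, |fk k x - f x|) atTop (nhds 0) :=
  stmt19_general n A hAb M fk f hmeas hfmeas hbk hbf hweak hae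
end
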